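/- Let G be a graph of order n and H a graph whose maximum degree is at most its order minus two. Then γ_oidR(G ⊙ H) equals the minimum, over all partitions (V_0, V_1, V_2, V_3) of V(G) with V_0 independent, of |V_0|(n(H) + γ(H)) + |V_1|(γ_oidR(H) + 1) + |V_2|(γ_oiR(H) + 2) + |V_3|(β(H) + 3). -/

import Mathlib

open SimpleGraph Finset

/-- Outer independent double Roman dominating function. -/
def IsOIDRDF {V : Type*} (G : SimpleGraph V) (f : V → ℕ) : Prop :=
  (∀ v, f v ≤ 3) ∧
  (∀ v, f v = 0 → (∃ u, G.Adj v u ∧ f u = 3) ∨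
    (∃ u w, u ≠ w ∧ G.Adj v u ∧ G.Adj v w ∧ f u = 2 ∧ f w = 2)) ∧
  (∀ v, f v = 1 → ∃ u, G.Adj v u ∧ 2 ≤ f u) ∧
  (∀ u v, G.Adj u v → f u = 0 → f v ≠ 0)

/-- Outer independent double Roman domination number. -/
noncomputable def oidRNum {V : Type*} (G : SimpleGraph V) [Fintype V] : ℕ :=
  sInf {w | ∃ f : V → ℕ, IsOIDRDF G f ∧ w = ∑ v, f v}

/-- Outer independent Roman dominating function. -/
def IsOIRDF {V : Type*} (G : SimpleGraph V) (f : V → ℕ) : Prop :=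
  (∀ v, f v ≤ 2) ∧
  (∀ v, f v = 0 → ∃ u, G.Adj v u ∧ f u = 2) ∧
  (∀ u v, G.Adj u v → f u = 0 → f v ≠ 0)

/-- Outer independent Roman domination number. -/
noncomputable def oiRNum {V : Type*} (G : SimpleGraph V) [Fintype V] : ℕ :=
  sInf {w | ∃ f : V → ℕ, IsOIRDF G f ∧ w = ∑ v, f v}

/-- Vertex cover number. -/
noncomputable def coverNum {V : Type*} (G : SimpleGraph V) [Fintype V] : ℕ :=
  sInf {k | ∃ S : Finset V, S.card = k ∧ ∀ u v, G.Adj u v → u ∈ S ∨ v ∈ S}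

/-- Domination number. -/
noncomputable def domNum {V : Type*} (G : SimpleGraph V) [Fintype V] : ℕ :=
  sInf {k | ∃ S : Finset V, S.card = k ∧ ∀ v, v ∉ S → ∃ u ∈ S, G.Adj v u}

/-- Independence number. -/
noncomputable def indNum {V : Type*} (G : SimpleGraph V) [Fintype V] : ℕ :=
  sSup {k | ∃ S : Finset V, S.card = k ∧ ∀ u ∈ S, ∀ v ∈ S, ¬ G.Adj u v}

/-- Maximum degree. -/
noncomputable def maxDeg {V : Type*} (G : SimpleGraph V) [Fintype V] : ℕ :=
  sSup (Set.range fun v => Nat.card {u | G.Adj v u})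

/-- Underlying relation for the corona product. -/
def coronaRel {V W : Type*} (G : SimpleGraph V) (H : SimpleGraph W) :
    (V ⊕ V × W) → (V ⊕ V × W) → Prop
  | Sum.inl u, Sum.inl v => G.Adj u v
  | Sum.inl u, Sum.inr p => u = p.1
  | Sum.inr p, Sum.inl u => u = p.1
  | Sum.inr p, Sum.inr q => p.1 = q.1 ∧ H.Adj p.2 q.2

/-- The corona product `G ⊙ H`. -/
def corona {V W : Type*} (G : SimpleGraph V) (H : SimpleGraph W) :
    SimpleGraph (V ⊕ V × W) :=
  SimpleGraph.fromRel (coronaRel G H)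

/-!
Give each vertex `v` of `G` the label `f v ∈ {0,1,2,3}`. The weight an OIDRDF `f` of `G ⊙ H`
puts on `v` and its copy `H_v` is at least `f v` plus the cost of that label: if `f v = 0`, every
copy vertex is positive and those of value `≥ 2` dominate `H`; if `f v = 1`, `f` restricts to an
OIDRDF of `H`; if `f v = 2`, capping `f` at `2` on `H_v` gives an OIRDF of `H`; if `f v = 3`, the
positive copy vertices cover `H`. Conversely, a minimum function of the matching kind on `H`,
with the apex of the cone `K₁ ⊙ H` carrying the label, is an OIDRDF of that cone, and such cones
glue to an OIDRDF of `G ⊙ H` whenever the `0`-labels are independent in `G`. The degree bound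
gives `γ(H) ≥ 2`, so that a `0`-labelled vertex sees two `2`s in its copy.
-/

open Sum

section Numbers

variable {W : Type*} (H : SimpleGraph W)

lemma IsOIDRDF.exists_two_le [Nonempty W] {f : W → ℕ} (hf : IsOIDRDF H f) :
    ∃ u, 2 ≤ f u := by
  obtain ⟨w⟩ := ‹Nonempty W›
  obtain h | h | h : f w = 0 ∨ f w = 1 ∨ 2 ≤ f w := by omega
  · rcases hf.2.1 w h with ⟨u, -, hu⟩ | ⟨u, -, -, -, -, hu, -⟩ <;> exact ⟨u, by omega⟩
  · exact (hf.2.2.1 w h).imp fun u hu => hu.2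
  · exact ⟨w, h⟩

variable [Fintype W]

lemma exists_isOIDRDF_sum_eq_oidRNum : ∃ f, IsOIDRDF H f ∧ ∑ w, f w = oidRNum H := by
  have hne : {w | ∃ f : W → ℕ, IsOIDRDF H f ∧ w = ∑ v, f v}.Nonempty :=
    ⟨_, fun _ => 2, ⟨fun _ => by norm_num, by simp, by simp, by simp⟩, rfl⟩
  obtain ⟨f, hf, hsum⟩ := Nat.sInf_mem hne
  exact ⟨f, hf, hsum.symm⟩

lemma oidRNum_le_sum {f : W → ℕ} (hf : IsOIDRDF H f) : oidRNum H ≤ ∑ w, f w :=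
  Nat.sInf_le ⟨f, hf, rfl⟩

lemma exists_isOIRDF_sum_eq_oiRNum : ∃ f, IsOIRDF H f ∧ ∑ w, f w = oiRNum H := by
  have hne : {w | ∃ f : W → ℕ, IsOIRDF H f ∧ w = ∑ v, f v}.Nonempty :=
    ⟨_, fun _ => 2, ⟨fun _ => le_rfl, by simp, by simp⟩, rfl⟩
  obtain ⟨f, hf, hsum⟩ := Nat.sInf_mem hne
  exact ⟨f, hf, hsum.symm⟩

lemma oiRNum_le_sum {f : W → ℕ} (hf : IsOIRDF H f) : oiRNum H ≤ ∑ w, f w :=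
  Nat.sInf_le ⟨f, hf, rfl⟩

lemma exists_cover_card_eq_coverNum :
    ∃ C : Finset W, C.card = coverNum H ∧ ∀ u v, H.Adj u v → u ∈ C ∨ v ∈ C := by
  have hne :
      {k | ∃ C : Finset W, C.card = k ∧ ∀ u v, H.Adj u v → u ∈ C ∨ v ∈ C}.Nonempty :=
    ⟨_, univ, rfl, fun u _ _ => Or.inl (mem_univ u)⟩
  exact Nat.sInf_mem hne

lemma coverNum_le_card {C : Finset W} (hC : ∀ u v, H.Adj u v → u ∈ C ∨ v ∈ C) :
    coverNum H ≤ C.card :=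
  Nat.sInf_le ⟨C, rfl, hC⟩

lemma exists_dominating_card_eq_domNum :
    ∃ S : Finset W, S.card = domNum H ∧ ∀ v, v ∉ S → ∃ u ∈ S, H.Adj v u := by
  have hne :
      {k | ∃ S : Finset W, S.card = k ∧ ∀ v, v ∉ S → ∃ u ∈ S, H.Adj v u}.Nonempty :=
    ⟨_, univ, rfl, fun v hv => absurd (mem_univ v) hv⟩
  exact Nat.sInf_mem hne

lemma domNum_le_card {S : Finset W} (hS : ∀ v, v ∉ S → ∃ u ∈ S, H.Adj v u) :
    domNum H ≤ S.card :=
  Nat.sInf_le ⟨S, rfl, hS⟩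

lemma coverNum_le_sum (f : W → ℕ) (hf : ∀ u v, H.Adj u v → f u ≠ 0 ∨ f v ≠ 0) :
    coverNum H ≤ ∑ w, f w := by
  classical
  calc coverNum H ≤ (univ.filter fun w => f w ≠ 0).card :=
        coverNum_le_card H fun u v huv => by simpa using hf u v huv
    _ = ∑ w, if f w ≠ 0 then 1 else 0 := card_filter _ _
    _ ≤ ∑ w, f w := sum_le_sum fun w _ => by split <;> omega

lemma card_add_domNum_le_sum (f : W → ℕ) (hpos : ∀ w, f w ≠ 0)
    (hdom : ∀ w, f w = 1 → ∃ u, H.Adj w u ∧ 2 ≤ f u) :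
    Fintype.card W + domNum H ≤ ∑ w, f w := by
  classical
  have hS : domNum H ≤ (univ.filter fun w => 2 ≤ f w).card :=
    domNum_le_card H fun w hw => by
      obtain ⟨u, hu, h2⟩ := hdom w (by have := hpos w; simp at hw; omega)
      exact ⟨u, by simpa using h2, hu⟩
  calc Fintype.card W + domNum H
      ≤ ∑ w : W, 1 + ∑ w, if 2 ≤ f w then 1 else 0 := by
        rw [← card_filter, sum_const, smul_eq_mul, mul_one, card_univ]; omega
    _ = ∑ w, (1 + if 2 ≤ f w then 1 else 0) := sum_add_distrib.symm
    _ ≤ ∑ w, f w := sum_le_sum fun w _ => by have := hpos w; split <;> omega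

lemma card_sub_one_le_maxDeg {u : W} (hu : ∀ v, v ≠ u → H.Adj u v) :
    Fintype.card W - 1 ≤ maxDeg H := by
  have hsub : ({u}ᶜ : Set W) ⊆ {v | H.Adj u v} := fun v hv => hu v hv
  calc Fintype.card W - 1 = ({u}ᶜ : Set W).ncard := by
        rw [Set.ncard_compl, Set.ncard_singleton, Nat.card_eq_fintype_card]
    _ ≤ Nat.card {v | H.Adj u v} := by rw [Nat.card_coe_set_eq]; exact Set.ncard_le_ncard hsub
    _ ≤ maxDeg H := le_csSup (Set.finite_range _).bddAbove ⟨u, rfl⟩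

lemma two_le_domNum (hH : maxDeg H + 2 ≤ Fintype.card W) : 2 ≤ domNum H := by
  obtain ⟨S, hcard, hdom⟩ := exists_dominating_card_eq_domNum H
  by_contra! hlt
  obtain ⟨w⟩ : Nonempty W := Fintype.card_pos_iff.1 (by omega : 0 < Fintype.card W)
  have hS : S.Nonempty := by
    by_cases hw : w ∈ S
    exacts [⟨w, hw⟩, (hdom w hw).imp fun u h => h.1]
  obtain ⟨u, rfl⟩ := card_eq_one.1 (by have := hS.card_pos; omega : S.card = 1)
  have := card_sub_one_le_maxDeg H (u := u) fun v hv => by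
    obtain ⟨x, hx, hvx⟩ := hdom v (by simpa using hv)
    exact mem_singleton.1 hx ▸ hvx.symm
  omega

end Numbers

section Corona

variable {V W : Type*} (G : SimpleGraph V) (H : SimpleGraph W)

@[simp]
lemma corona_adj_inl_inl {u v : V} : (corona G H).Adj (inl u) (inl v) ↔ G.Adj u v := by
  simp only [corona, fromRel_adj, coronaRel, ne_eq, inl.injEq]
  exact ⟨fun h => h.2.elim id G.adj_symm, fun h => ⟨G.ne_of_adj h, Or.inl h⟩⟩

@[simp]
lemma corona_adj_inl_inr {u : V} {p : V × W} : (corona G H).Adj (inl u) (inr p) ↔ u = p.1 := by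
  simp [corona, coronaRel]

@[simp]
lemma corona_adj_inr_inl {u : V} {p : V × W} : (corona G H).Adj (inr p) (inl u) ↔ u = p.1 := by
  simp [corona, coronaRel]

@[simp]
lemma corona_adj_inr_inr {p q : V × W} :
    (corona G H).Adj (inr p) (inr q) ↔ p.1 = q.1 ∧ H.Adj p.2 q.2 := by
  simp only [corona, fromRel_adj, coronaRel, ne_eq, inr.injEq]
  refine ⟨fun h => h.2.elim id fun h' => ⟨h'.1.symm, h'.2.symm⟩,
    fun h => ⟨?_, Or.inl h⟩⟩
  rintro rfl
  exact H.irrefl h.2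

lemma corona_adj_inr_iff {v : V} {w : W} {y : V ⊕ V × W} :
    (corona G H).Adj (inr (v, w)) y ↔ y = inl v ∨ ∃ u, y = inr (v, u) ∧ H.Adj w u := by
  rcases y with u | ⟨u, x⟩ <;> simp [eq_comm]

end Corona

section Transfer

variable {V' V : Type*} {G' : SimpleGraph V'} {G : SimpleGraph V} {f : V → ℕ}

lemma IsOIDRDF.zero_dominated_of_comp (φ : G' →g G) (hφ : Function.Injective φ)
    (hf : IsOIDRDF G' (f ∘ φ)) {y : V'} (hy : f (φ y) = 0) :
    (∃ u, G.Adj (φ y) u ∧ f u = 3) ∨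
      ∃ u w, u ≠ w ∧ G.Adj (φ y) u ∧ G.Adj (φ y) w ∧ f u = 2 ∧ f w = 2 := by
  rcases hf.2.1 y hy with ⟨u, hu, h3⟩ | ⟨u, w, hne, hu, hw, hu2, hw2⟩
  · exact Or.inl ⟨φ u, φ.map_adj hu, h3⟩
  · exact Or.inr ⟨φ u, φ w, hφ.ne hne, φ.map_adj hu, φ.map_adj hw, hu2, hw2⟩

lemma IsOIDRDF.one_dominated_of_comp (φ : G' →g G) (hf : IsOIDRDF G' (f ∘ φ)) {y : V'}
    (hy : f (φ y) = 1) : ∃ u, G.Adj (φ y) u ∧ 2 ≤ f u :=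
  (hf.2.2.1 y hy).elim fun u hu => ⟨φ u, φ.map_adj hu.1, hu.2⟩

end Transfer

section Cone

variable {V W : Type*} (G : SimpleGraph V) (H : SimpleGraph W)

abbrev cone : SimpleGraph (Unit ⊕ Unit × W) := corona ⊥ H

def coneFun (a : ℕ) (f : W → ℕ) : Unit ⊕ Unit × W → ℕ :=
  Sum.elim (fun _ => a) (fun p => f p.2)

@[simp] lemma coneFun_inl (a : ℕ) (f : W → ℕ) (x : Unit) : coneFun a f (inl x) = a := rfl

@[simp] lemma coneFun_inr (a : ℕ) (f : W → ℕ) (p : Unit × W) :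
    coneFun a f (inr p) = f p.2 := rfl

def coneEmbedding (v : V) : cone H ↪g corona G H where
  toFun := Sum.map (fun _ => v) (fun p => (v, p.2))
  inj' := Sum.map_injective.2
    ⟨fun _ _ _ => Subsingleton.elim _ _,
      fun _ _ h => Prod.ext (Subsingleton.elim _ _) (Prod.ext_iff.1 h).2⟩
  map_rel_iff' := by rintro (_ | _) (_ | _) <;> simp

lemma comp_coneEmbedding (F : V ⊕ V × W → ℕ) (v : V) :
    F ∘ coneEmbedding G H v = coneFun (F (inl v)) fun w => F (inr (v, w)) := by
  ext (_ | _) <;> rfl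

lemma isOIDRDF_corona_of_cones {F : V ⊕ V × W → ℕ}
    (hbase : ∀ u v, G.Adj u v → F (inl u) = 0 → F (inl v) ≠ 0)
    (hcone : ∀ v, IsOIDRDF (cone H) (F ∘ coneEmbedding G H v)) :
    IsOIDRDF (corona G H) F := by
  have hcover : ∀ x, ∃ v y, coneEmbedding G H v y = x := by
    rintro (v | ⟨v, w⟩)
    exacts [⟨v, inl (), rfl⟩, ⟨v, inr ((), w), rfl⟩]
  refine ⟨fun x => ?_, fun x => ?_, fun x => ?_, ?_⟩
  · obtain ⟨v, y, rfl⟩ := hcover x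
    exact (hcone v).1 y
  · obtain ⟨v, y, rfl⟩ := hcover x
    exact (hcone v).zero_dominated_of_comp (coneEmbedding G H v).toHom
      (coneEmbedding G H v).injective
  · obtain ⟨v, y, rfl⟩ := hcover x
    exact (hcone v).one_dominated_of_comp (coneEmbedding G H v).toHom
  · rintro (u | ⟨u, p⟩) y hadj
    · rcases y with v | ⟨v, q⟩
      · exact hbase u v ((corona_adj_inl_inl G H).1 hadj)
      · obtain rfl : u = v := (corona_adj_inl_inr G H).1 hadj
        exact (hcone u).2.2.2 (inl ()) (inr ((), q)) (by simp)
    · obtain ⟨b, rfl⟩ : ∃ b, coneEmbedding G H u b = y := by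
        rcases (corona_adj_inr_iff G H).1 hadj with rfl | ⟨q, rfl, -⟩
        exacts [⟨inl (), rfl⟩, ⟨inr ((), q), rfl⟩]
      exact (hcone u).2.2.2 (inr ((), p)) b ((coneEmbedding G H u).map_adj_iff.1 hadj)

end Cone

section ConeFunctions

variable {W : Type*} (H : SimpleGraph W)

lemma isOIDRDF_cone_zero [DecidableEq W] {S : Finset W}
    (hS : ∀ w, w ∉ S → ∃ u ∈ S, H.Adj w u) (hS2 : 2 ≤ S.card) :
    IsOIDRDF (cone H) (coneFun 0 fun w => if w ∈ S then 2 else 1) := by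
  obtain ⟨a, ha, b, hb, hab⟩ := one_lt_card.1 hS2
  refine ⟨?_, ?_, ?_, ?_⟩
  · rintro (_ | _) <;> simp only [coneFun_inl, coneFun_inr] <;> (try split_ifs) <;> omega
  · rintro (_ | ⟨_, w⟩) h
    · exact Or.inr ⟨inr ((), a), inr ((), b), by simpa using hab, by simp, by simp,
        by simp [ha], by simp [hb]⟩
    · simp only [coneFun_inr] at h
      split_ifs at h
  · rintro (_ | ⟨_, w⟩) h
    · simp at h
    · obtain ⟨u, hu, hwu⟩ := hS w fun hw => by simp [hw] at h
      exact ⟨inr ((), u), by simpa using hwu, by simp [hu]⟩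
  · rintro (_ | _) (_ | _) hadj h
    · simp at hadj
    all_goals simp only [coneFun_inl, coneFun_inr] at h ⊢; split_ifs at h ⊢ <;> omega

lemma IsOIDRDF.cone_one [Nonempty W] {f : W → ℕ} (hf : IsOIDRDF H f) :
    IsOIDRDF (cone H) (coneFun 1 f) := by
  refine ⟨?_, ?_, ?_, ?_⟩
  · rintro (_ | ⟨_, w⟩)
    exacts [by simp, hf.1 w]
  · rintro (_ | ⟨_, w⟩) h
    · simp at h
    · rcases hf.2.1 w h with ⟨u, hwu, h3⟩ | ⟨u, x, hne, hwu, hwx, hu2, hx2⟩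
      · exact Or.inl ⟨inr ((), u), by simpa using hwu, h3⟩
      · exact Or.inr ⟨inr ((), u), inr ((), x), by simpa using hne, by simpa using hwu,
          by simpa using hwx, hu2, hx2⟩
  · rintro (_ | ⟨_, w⟩) h
    · obtain ⟨u, hu⟩ := hf.exists_two_le
      exact ⟨inr ((), u), by simp, hu⟩
    · obtain ⟨u, hwu, hu⟩ := hf.2.2.1 w h
      exact ⟨inr ((), u), by simpa using hwu, hu⟩
  · rintro (_ | ⟨_, w⟩) (_ | ⟨_, u⟩) hadj h
    · simp at hadj
    · simp at h
    · simp
    · exact hf.2.2.2 w u (by simpa using hadj) h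

lemma IsOIRDF.cone_two {f : W → ℕ} (hf : IsOIRDF H f) : IsOIDRDF (cone H) (coneFun 2 f) := by
  refine ⟨?_, ?_, ?_, ?_⟩
  · rintro (_ | ⟨_, w⟩)
    exacts [by simp, (hf.1 w).trans (by norm_num)]
  · rintro (_ | ⟨_, w⟩) h
    · simp at h
    · obtain ⟨u, hwu, hu⟩ := hf.2.1 w h
      exact Or.inr ⟨inr ((), u), inl (), by simp, by simpa using hwu, by simp, hu, rfl⟩
  · rintro (_ | ⟨_, w⟩) h
    · simp at h
    · exact ⟨inl (), by simp, by simp⟩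
  · rintro (_ | ⟨_, w⟩) (_ | ⟨_, u⟩) hadj h
    · simp at hadj
    · simp at h
    · simp
    · exact hf.2.2 w u (by simpa using hadj) h

lemma isOIDRDF_cone_three [DecidableEq W] {C : Finset W}
    (hC : ∀ u v, H.Adj u v → u ∈ C ∨ v ∈ C) :
    IsOIDRDF (cone H) (coneFun 3 fun w => if w ∈ C then 1 else 0) := by
  refine ⟨?_, ?_, ?_, ?_⟩
  · rintro (_ | _) <;> simp only [coneFun_inl, coneFun_inr] <;> (try split_ifs) <;> omega
  · rintro (_ | ⟨_, w⟩) h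
    · simp at h
    · exact Or.inl ⟨inl (), by simp, by simp⟩
  · rintro (_ | ⟨_, w⟩) h
    · simp at h
    · exact ⟨inl (), by simp, by simp⟩
  · rintro (_ | ⟨_, w⟩) (_ | ⟨_, u⟩) hadj h
    · simp at hadj
    · simp at h
    · simp
    · have := hC w u (by simpa using hadj)
      simp only [coneFun_inr] at h ⊢
      split_ifs at h ⊢ <;> simp_all

end ConeFunctions

section Cost

variable {V W : Type*} [Fintype W] (G : SimpleGraph V) (H : SimpleGraph W)

/-- Least weight that an OIDRDF of `G ⊙ H` can put on a vertex of `G` of value `i` together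
with its copy of `H`. -/
noncomputable def coronaCost : ℕ → ℕ
  | 0 => Fintype.card W + domNum H
  | 1 => oidRNum H + 1
  | 2 => oiRNum H + 2
  | _ => coverNum H + 3

lemma exists_isOIDRDF_cone_eq_coronaCost (hH : maxDeg H + 2 ≤ Fintype.card W) {i : ℕ}
    (hi : i ≤ 3) :
    ∃ f, IsOIDRDF (cone H) (coneFun i f) ∧ i + ∑ w, f w = coronaCost H i := by
  classical
  interval_cases i
  · obtain ⟨S, hcard, hS⟩ := exists_dominating_card_eq_domNum H
    refine ⟨_, isOIDRDF_cone_zero H hS (hcard ▸ two_le_domNum H hH), ?_⟩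
    calc 0 + ∑ w, (if w ∈ S then 2 else 1)
        = ∑ w, (1 + if w ∈ S then 1 else 0) := by
          rw [zero_add]; exact sum_congr rfl fun w _ => by split_ifs <;> rfl
      _ = coronaCost H 0 := by simp [sum_add_distrib, coronaCost, hcard]
  · have : Nonempty W := Fintype.card_pos_iff.1 (by omega : 0 < Fintype.card W)
    obtain ⟨f, hf, hsum⟩ := exists_isOIDRDF_sum_eq_oidRNum H
    exact ⟨f, hf.cone_one H, by simp [coronaCost, hsum, add_comm]⟩
  · obtain ⟨f, hf, hsum⟩ := exists_isOIRDF_sum_eq_oiRNum H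
    exact ⟨f, hf.cone_two H, by simp [coronaCost, hsum, add_comm]⟩
  · obtain ⟨C, hcard, hC⟩ := exists_cover_card_eq_coverNum H
    refine ⟨_, isOIDRDF_cone_three H hC, ?_⟩
    simp [coronaCost, hcard, add_comm]

lemma oidRNum_corona_le [Fintype V] (hH : maxDeg H + 2 ≤ Fintype.card W) (g : V → Fin 4)
    (hg : ∀ u v, G.Adj u v → g u = 0 → g v ≠ 0) :
    oidRNum (corona G H) ≤ ∑ v, coronaCost H (g v) := by
  choose φ hφ hφsum using fun i : Fin 4 =>
    exists_isOIDRDF_cone_eq_coronaCost H hH (i := i) (by omega)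
  let F : V ⊕ V × W → ℕ := Sum.elim (fun v => g v) fun p => φ (g p.1) p.2
  have hF : IsOIDRDF (corona G H) F := by
    refine isOIDRDF_corona_of_cones G H
      (fun u v huv hu hv => hg u v huv (Fin.ext hu) (Fin.ext hv)) fun v => ?_
    rw [comp_coneEmbedding]
    exact hφ (g v)
  calc oidRNum (corona G H) ≤ ∑ x, F x := oidRNum_le_sum _ hF
    _ = ∑ v, (g v + ∑ w, φ (g v) w) := by
      rw [Fintype.sum_sum_type, Fintype.sum_prod_type, ← sum_add_distrib]; rfl
    _ = ∑ v, coronaCost H (g v) := sum_congr rfl fun v _ => hφsum (g v)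

end Cost

section Restriction

variable {V W : Type*} {G : SimpleGraph V} {H : SimpleGraph W} {F : V ⊕ V × W → ℕ}

lemma IsOIDRDF.copy_ne_zero (hF : IsOIDRDF (corona G H) F) {v : V} (hv : F (inl v) = 0) (w : W) :
    F (inr (v, w)) ≠ 0 :=
  hF.2.2.2 _ _ (by simp) hv

lemma IsOIDRDF.card_add_domNum_le [Fintype W] (hF : IsOIDRDF (corona G H) F) {v : V}
    (hv : F (inl v) = 0) : Fintype.card W + domNum H ≤ ∑ w, F (inr (v, w)) := by
  refine card_add_domNum_le_sum H _ (hF.copy_ne_zero hv) fun w hw => ?_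
  obtain ⟨y, hy, h2⟩ := hF.2.2.1 _ hw
  rcases (corona_adj_inr_iff G H).1 hy with rfl | ⟨u, rfl, hu⟩
  · omega
  · exact ⟨u, hu, h2⟩

lemma IsOIDRDF.copy_of_eq_one (hF : IsOIDRDF (corona G H) F) {v : V} (hv : F (inl v) = 1) :
    IsOIDRDF H fun w => F (inr (v, w)) := by
  refine ⟨fun w => hF.1 _, fun w hw => ?_, fun w hw => ?_,
    fun w u hwu => hF.2.2.2 _ _ (by simpa)⟩
  · rcases hF.2.1 _ hw with ⟨y, hy, h3⟩ | ⟨y, y', hne, hy, hy', h2, h2'⟩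
    · rcases (corona_adj_inr_iff G H).1 hy with rfl | ⟨u, rfl, hu⟩
      · omega
      · exact Or.inl ⟨u, hu, h3⟩
    · rcases (corona_adj_inr_iff G H).1 hy with rfl | ⟨u, rfl, hu⟩
      · omega
      rcases (corona_adj_inr_iff G H).1 hy' with rfl | ⟨u', rfl, hu'⟩
      · omega
      exact Or.inr ⟨u, u', fun h => hne (h ▸ rfl), hu, hu', h2, h2'⟩
  · obtain ⟨y, hy, h2⟩ := hF.2.2.1 _ hw
    rcases (corona_adj_inr_iff G H).1 hy with rfl | ⟨u, rfl, hu⟩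
    · omega
    · exact ⟨u, hu, h2⟩

-- A `0` in the copy still sees a `2` there: the apex accounts for at most one of the two `2`s it
-- may need.
lemma IsOIDRDF.copy_min_two_of_eq_two (hF : IsOIDRDF (corona G H) F) {v : V}
    (hv : F (inl v) = 2) : IsOIRDF H fun w => min (F (inr (v, w))) 2 := by
  refine ⟨fun w => min_le_right _ _, fun w hw => ?_, fun w u hwu hw => ?_⟩
  · dsimp only at hw ⊢
    replace hw : F (inr (v, w)) = 0 := by omega
    rcases hF.2.1 _ hw with ⟨y, hy, h3⟩ | ⟨y, y', hne, hy, hy', h2, h2'⟩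
    · rcases (corona_adj_inr_iff G H).1 hy with rfl | ⟨u, rfl, hu⟩
      · omega
      · exact ⟨u, hu, by omega⟩
    · rcases (corona_adj_inr_iff G H).1 hy with rfl | ⟨u, rfl, hu⟩
      · rcases (corona_adj_inr_iff G H).1 hy' with rfl | ⟨u', rfl, hu'⟩
        · exact absurd rfl hne
        · exact ⟨u', hu', by omega⟩
      · exact ⟨u, hu, by omega⟩
  · dsimp only at hw ⊢
    have := hF.2.2.2 _ (inr (v, u)) (by simpa) (by omega : F (inr (v, w)) = 0)
    omega

lemma IsOIDRDF.coverNum_le [Fintype W] (hF : IsOIDRDF (corona G H) F) (v : V) :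
    coverNum H ≤ ∑ w, F (inr (v, w)) :=
  coverNum_le_sum H _ fun u w huw => by
    by_cases hu : F (inr (v, u)) = 0
    · exact Or.inr (hF.2.2.2 _ _ (by simpa) hu)
    · exact Or.inl hu

lemma IsOIDRDF.coronaCost_le [Fintype W] (hF : IsOIDRDF (corona G H) F) (v : V) :
    coronaCost H (F (inl v)) ≤ F (inl v) + ∑ w, F (inr (v, w)) := by
  obtain h | h | h | h : F (inl v) = 0 ∨ F (inl v) = 1 ∨ F (inl v) = 2 ∨ F (inl v) = 3 := by
    have := hF.1 (inl v); omega
  all_goals rw [h]; simp only [coronaCost]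
  · exact (hF.card_add_domNum_le h).trans (by omega)
  · have := oidRNum_le_sum H (hF.copy_of_eq_one h); omega
  · have := (oiRNum_le_sum H (hF.copy_min_two_of_eq_two h)).trans
      (sum_le_sum fun w _ => min_le_left _ _)
    omega
  · have := hF.coverNum_le v; omega

end Restriction

lemma sum_comp_fin_four {V : Type*} [Fintype V] (g : V → Fin 4) (c : Fin 4 → ℕ) :
    ∑ v, c (g v) =
      (univ.filter fun v => g v = 0).card * c 0 + (univ.filter fun v => g v = 1).card * c 1
        + (univ.filter fun v => g v = 2).card * c 2
        + (univ.filter fun v => g v = 3).card * c 3 := by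
  have hfiber (i : Fin 4) :
      ∑ v with g v = i, c (g v) = (univ.filter fun v => g v = i).card * c i := by
    rw [sum_congr rfl fun v hv => congrArg c (mem_filter.1 hv).2, sum_const, smul_eq_mul]
  rw [← sum_fiberwise univ g, Fin.sum_univ_four, hfiber, hfiber, hfiber, hfiber]

lemma exists_labelling_sum_coronaCost_le {V W : Type*} [Fintype V] [Fintype W]
    (G : SimpleGraph V) (H : SimpleGraph W) :
    ∃ g : V → Fin 4, (∀ u v, G.Adj u v → g u = 0 → g v ≠ 0) ∧
      ∑ v, coronaCost H (g v) ≤ oidRNum (corona G H) := by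
  obtain ⟨F, hF, hsum⟩ := exists_isOIDRDF_sum_eq_oidRNum (corona G H)
  refine ⟨fun v => ⟨F (inl v), Nat.lt_succ_of_le (hF.1 _)⟩,
    fun u v huv hu hv => hF.2.2.2 _ _ (by simpa) (Fin.val_eq_of_eq hu) (Fin.val_eq_of_eq hv), ?_⟩
  rw [← hsum, Fintype.sum_sum_type, Fintype.sum_prod_type, ← sum_add_distrib]
  exact sum_le_sum fun v _ => hF.coronaCost_le v

theorem stmt18 {V W : Type*} [Fintype V] [Fintype W]
    (G : SimpleGraph V) (H : SimpleGraph W)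
    (hH : maxDeg H + 2 ≤ Fintype.card W) :
    oidRNum (corona G H) =
      sInf {w | ∃ g : V → Fin 4,
        (∀ u v, G.Adj u v → g u = 0 → g v ≠ 0) ∧
        w = (Finset.univ.filter (fun v => g v = 0)).card * (Fintype.card W + domNum H)
          + (Finset.univ.filter (fun v => g v = 1)).card * (oidRNum H + 1)
          + (Finset.univ.filter (fun v => g v = 2)).card * (oiRNum H + 2)
          + (Finset.univ.filter (fun v => g v = 3)).card * (coverNum H + 3)} := by
  have hcost (g : V → Fin 4) := sum_comp_fin_four g fun i => coronaCost H i
  apply le_antisymm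
  · apply le_csInf
    · exact ⟨_, fun _ => 3, by simp, rfl⟩
    rintro _ ⟨g, hg, rfl⟩
    exact (oidRNum_corona_le G H hH g hg).trans_eq (hcost g)
  · obtain ⟨g, hg, hle⟩ := exists_labelling_sum_coronaCost_le G H
    refine (Nat.sInf_le ?_).trans hle
    exact ⟨g, hg, hcost g⟩
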